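/- arXiv:0912.4854 — 4 statements merged into one kernel-verified Lean document; each statement's English description precedes it below -/
import Mathlib

section
/- Let e > 1 be an integer and let ℓ be an odd prime. Let ξ ∈ ℂ be a root of unity of odd order d > 1 such that ℓ ∤ d and gcd(e, ℓd) = 1. Then ∏_ω cyc(ωξ) = cyc(ξ^ℓ)/cyc(ξ), where the product runs over all primitive ℓ-th roots of unity ω ∈ ℂ. (This is the Euler-system norm relation N_{F_m(nℓ)/F_m(n)}(cyc(ζ_ℓ ξ)) = cyc(ξ^ℓ)/cyc(ξ) of Lemma 4.4(1), with the Galois conjugates of ζ_ℓ written out as the primitive ℓ-th roots of unity.) -/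
/-- For a root of unity `ζ` of odd order `d > 1` with `gcd e d = 1`, the cyclotomic unit
`cyc ζ = ζ^{((d+1)/2)(1-e)} (1-ζ^e)/(1-ζ) = (ζ^{-e/2}-ζ^{e/2})/(ζ^{-1/2}-ζ^{1/2})`. -/
noncomputable def cyc (e : ℕ) (ζ : ℂ) : ℂ :=
  ζ ^ ((((orderOf ζ : ℤ) + 1) / 2) * (1 - (e : ℤ))) * (1 - ζ ^ e) / (1 - ζ)

/-! Since `ℓ` and `d` are coprime, `ωξ` has order `ℓd`, and the square root `ξ^{(ℓd+1)/2}` equals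
`ξ^{(d+1)/2}` because the exponents differ by `d(ℓ-1)/2`. The primitive `ℓ`-th roots have
product `1` (`ℓ` is odd), so the `ω`-parts of the prefactors cancel. As `e` is prime to `ℓ`,
`ω ↦ ω^e` permutes the primitive `ℓ`-th roots, and what is left are two instances of
`∏_ω (1 - ωy) = Φ_ℓ(y) = (1 - y^ℓ)/(1 - y)`, at `y = ξ^e` and at `y = ξ`. -/

open Polynomial Finset

namespace IsPrimitiveRoot

section CommRing

variable {R : Type*} [CommRing R] [IsDomain R] {n : ℕ} {ζ : R}

theorem prod_neg_primitiveRoots (hζ : IsPrimitiveRoot ζ n) (hn : 1 < n) :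
    ∏ ω ∈ primitiveRoots n R, (-ω) = 1 := by
  have h := cyclotomic_coeff_zero R hn
  rw [coeff_zero_eq_eval_zero, cyclotomic_eq_prod_X_sub_primitiveRoots hζ, eval_prod] at h
  simpa using h

theorem prod_primitiveRoots (hζ : IsPrimitiveRoot ζ n) (hn : 2 < n) :
    ∏ ω ∈ primitiveRoots n R, ω = 1 := by
  have hcard : Even #(primitiveRoots n R) := hζ.card_primitiveRoots ▸ Nat.totient_even hn
  calc ∏ ω ∈ primitiveRoots n R, ω
      = ∏ ω ∈ primitiveRoots n R, ((-1) * -ω) := by simp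
    _ = 1 := by
      rw [prod_mul_distrib, prod_const, hcard.neg_one_pow, hζ.prod_neg_primitiveRoots (by omega),
        one_mul]

theorem prod_primitiveRoots_comp_pow {M : Type*} [CommMonoid M] {a : ℕ} (ha : a.Coprime n)
    [NeZero n] (f : R → M) :
    ∏ ω ∈ primitiveRoots n R, f (ω ^ a) = ∏ ω ∈ primitiveRoots n R, f ω := by
  rw [← prod_coe_sort, ← prod_coe_sort (primitiveRoots n R)]
  exact (primitiveRootsPowEquivOfCoprime (R := R) ha).prod_comp (fun ω => f ↑ω)

end CommRing

section Field

variable {K : Type*} [Field K] {n : ℕ} {ζ : K}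

theorem prod_one_sub_mul_primitiveRoots (hζ : IsPrimitiveRoot ζ n) (hn : 1 < n)
    (y : K) : ∏ ω ∈ primitiveRoots n K, (1 - ω * y) = (cyclotomic n K).eval y := by
  have hpos : 0 < n := by omega
  have hfactor : ∀ ω ∈ primitiveRoots n K, 1 - ω * y = -ω * (y - ω⁻¹) := fun ω hω => by
    have hω0 : ω ≠ 0 := ((mem_primitiveRoots hpos).1 hω).ne_zero hpos.ne'
    field_simp
    ring
  rw [prod_congr rfl hfactor, prod_mul_distrib, hζ.prod_neg_primitiveRoots hn, one_mul,
    cyclotomic_eq_prod_X_sub_primitiveRoots hζ, eval_prod]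
  refine prod_equiv (Equiv.inv K) (fun ω => ?_) (fun ω _ => by simp)
  simp [mem_primitiveRoots hpos, inv_iff]

theorem prod_one_sub_mul_primitiveRoots_prime {p : ℕ} (hp : p.Prime)
    (hζ : IsPrimitiveRoot ζ p) {y : K} (hy : y ≠ 1) :
    ∏ ω ∈ primitiveRoots p K, (1 - ω * y) = (1 - y ^ p) / (1 - y) := by
  have : Fact p.Prime := ⟨hp⟩
  have h := congrArg (eval y) (cyclotomic_prime_mul_X_sub_one K p)
  simp only [eval_mul, eval_sub, eval_X, eval_one, eval_pow] at h
  rw [hζ.prod_one_sub_mul_primitiveRoots hp.one_lt, eq_div_iff (sub_ne_zero.2 hy.symm)]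
  linear_combination -h

end Field

end IsPrimitiveRoot

theorem Int.odd_mul_add_one_ediv_two {l d : ℤ} (hl : Odd l) (hd : Odd d) :
    (l * d + 1) / 2 = (d + 1) / 2 + d * (l / 2) := by
  obtain ⟨a, rfl⟩ := hd
  obtain ⟨b, rfl⟩ := hl
  grind

theorem zpow_odd_mul_add_one_ediv_two {G₀ : Type*} [GroupWithZero G₀] {ξ : G₀} {d l : ℕ}
    (hξ : ξ ^ d = 1) (hd : Odd d) (hl : Odd l) (k : ℤ) :
    ξ ^ ((((l * d : ℕ) : ℤ) + 1) / 2 * k) = ξ ^ (((d : ℤ) + 1) / 2 * k) := by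
  have hξ0 : ξ ≠ 0 := by
    rintro rfl
    exact zero_ne_one ((zero_pow hd.pos.ne').symm.trans hξ)
  rw [Nat.cast_mul, Int.odd_mul_add_one_ediv_two (by exact_mod_cast hl) (by exact_mod_cast hd),
    add_mul, zpow_add₀ hξ0, mul_assoc, zpow_mul ξ (d : ℤ), zpow_natCast, hξ, one_zpow, mul_one]

theorem cyc_of_orderOf_eq {ζ : ℂ} {n : ℕ} (h : orderOf ζ = n) (e : ℕ) :
    cyc e ζ = ζ ^ (((n : ℤ) + 1) / 2 * (1 - e)) * (1 - ζ ^ e) / (1 - ζ) := by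
  rw [cyc, h]

theorem cyc_mul_of_isPrimitiveRoot {ω ξ : ℂ} {ℓ d : ℕ} (hω : IsPrimitiveRoot ω ℓ)
    (hξ : IsPrimitiveRoot ξ d) (hℓd : ℓ.Coprime d) (hℓ : Odd ℓ) (hd : Odd d) (e : ℕ) :
    cyc e (ω * ξ) = ω ^ ((((ℓ * d : ℕ) : ℤ) + 1) / 2 * (1 - e)) *
      ξ ^ (((d : ℤ) + 1) / 2 * (1 - e)) * (1 - ω ^ e * ξ ^ e) / (1 - ω * ξ) := by
  have hωξ : orderOf (ω * ξ) = ℓ * d := by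
    rw [(Commute.all ω ξ).orderOf_mul_eq_mul_orderOf_of_coprime
      (hω.eq_orderOf ▸ hξ.eq_orderOf ▸ hℓd), ← hω.eq_orderOf, ← hξ.eq_orderOf]
  rw [cyc_of_orderOf_eq hωξ, mul_zpow, mul_pow,
    zpow_odd_mul_add_one_ediv_two (ξ := ξ) hξ.pow_eq_one hd hℓ]

theorem statement0_general (e : ℕ) (ℓ : ℕ) (hℓ : ℓ.Prime) (hℓodd : Odd ℓ)
    (ξ : ℂ) (d : ℕ) (hd1 : 1 < d) (hdodd : Odd d) (hord : orderOf ξ = d)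
    (hℓd : ¬ ℓ ∣ d) (hcop : Nat.gcd e (ℓ * d) = 1) :
    ∏ ω ∈ primitiveRoots ℓ ℂ, cyc e (ω * ξ) = cyc e (ξ ^ ℓ) / cyc e ξ := by
  have : NeZero ℓ := ⟨hℓ.ne_zero⟩
  have hℓ2 : 2 < ℓ := hℓ.two_le.lt_of_ne (by rintro rfl; exact (by decide : ¬Odd 2) hℓodd)
  have hω₀ := Complex.isPrimitiveRoot_exp ℓ hℓ.ne_zero
  have hξ : IsPrimitiveRoot ξ d := hord ▸ IsPrimitiveRoot.orderOf ξ
  have hℓd' : ℓ.Coprime d := (Nat.Prime.coprime_iff_not_dvd hℓ).2 hℓd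
  have heℓ : e.Coprime ℓ := Nat.Coprime.coprime_dvd_right (dvd_mul_right ℓ d) hcop
  have hed : e.Coprime d := Nat.Coprime.coprime_dvd_right (dvd_mul_left d ℓ) hcop
  have hξ1 : ξ ≠ 1 := hξ.ne_one hd1
  have hξe : ξ ^ e ≠ 1 := (hξ.pow_of_coprime e hed).ne_one hd1
  have hξℓ : ξ ^ ℓ ≠ 1 := (hξ.pow_of_coprime ℓ hℓd').ne_one hd1
  rw [prod_congr rfl fun ω hω => cyc_mul_of_isPrimitiveRoot ((mem_primitiveRoots hℓ.pos).1 hω)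
      hξ hℓd' hℓodd hdodd e,
    prod_div_distrib, prod_mul_distrib, prod_mul_distrib, prod_zpow, hω₀.prod_primitiveRoots hℓ2,
    one_zpow, one_mul, prod_const, hω₀.card_primitiveRoots, Nat.totient_prime hℓ,
    IsPrimitiveRoot.prod_primitiveRoots_comp_pow heℓ fun ω => 1 - ω * ξ ^ e,
    hω₀.prod_one_sub_mul_primitiveRoots_prime hℓ hξe,
    hω₀.prod_one_sub_mul_primitiveRoots_prime hℓ hξ1,
    cyc_of_orderOf_eq (hξ.pow_of_coprime ℓ hℓd').eq_orderOf.symm, cyc_of_orderOf_eq hord]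
  set c : ℤ := ((d : ℤ) + 1) / 2 * (1 - e)
  have hpow : (ξ ^ ℓ) ^ c = (ξ ^ c) ^ (ℓ - 1) * ξ ^ c := by
    rw [pow_sub_one_mul hℓ.ne_zero, ← zpow_natCast, ← zpow_natCast, zpow_comm]
  have hcomm : (ξ ^ ℓ) ^ e = (ξ ^ e) ^ ℓ := by rw [← pow_mul, ← pow_mul, mul_comm]
  have hξc : ξ ^ c ≠ 0 := zpow_ne_zero c (hξ.ne_zero (by omega))
  rw [hpow, hcomm]
  field_simp [sub_ne_zero.2 hξ1.symm, sub_ne_zero.2 hξe.symm, sub_ne_zero.2 hξℓ.symm]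

/-- (Lemma 4.4(1), Euler-system norm relation.)  For `e > 1`, an odd prime
`ℓ`, and a root of unity `ξ` of odd order `d > 1` with `ℓ ∤ d` and `gcd (e, ℓd) = 1`, one has
`∏_ω cyc (ω ξ) = cyc (ξ^ℓ) / cyc ξ`, the product running over the primitive `ℓ`-th roots of
unity `ω ∈ ℂ`. -/
theorem statement0 (e : ℕ) (he : 1 < e) (ℓ : ℕ) (hℓ : ℓ.Prime) (hℓodd : Odd ℓ)
    (ξ : ℂ) (d : ℕ) (hd1 : 1 < d) (hdodd : Odd d) (hord : orderOf ξ = d)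
    (hℓd : ¬ ℓ ∣ d) (hcop : Nat.gcd e (ℓ * d) = 1) :
    ∏ ω ∈ primitiveRoots ℓ ℂ, cyc e (ω * ξ) = cyc e (ξ ^ ℓ) / cyc e ξ :=
  statement0_general e ℓ hℓ hℓodd ξ d hd1 hdodd hord hℓd hcop
end

section
/- Let p be an odd prime and e > 1 an integer. Let η ∈ ℂ be a root of unity of odd order d such that p² divides d and gcd(e, d) = 1. Then ∏_{ζ ∈ μ_p} cyc(ζη) = cyc(η^p), where the product runs over all p-th roots of unity ζ ∈ ℂ (including ζ = 1). (This is the norm relation N_{F_{m+1}(n)/F_m(n)}(cyc(ρ_{m+1}ξ)) = cyc(ρ_m ξ^p) of Lemma 4.4(2), with the Galois conjugates of ρ_{m+1} written out.) -/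
open Polynomial Finset

section OddOrderSqrt

variable {M : Type*} [Monoid M]

/-- The paper's `x ^ {1/2}`: for `x` of odd order, the square root of `x` in the group it
generates. -/
noncomputable def oddOrderSqrt (x : M) : M := x ^ ((orderOf x + 1) / 2)

theorem sq_pow_succ_div_two_of_pow_eq_one {u : M} {d : ℕ} (hd : Odd d) (hu : u ^ d = 1) :
    (u ^ 2) ^ ((d + 1) / 2) = u := by
  obtain ⟨k, rfl⟩ := hd
  rw [← pow_mul, show 2 * ((2 * k + 1 + 1) / 2) = 2 * k + 1 + 1 by omega, pow_succ, hu, one_mul]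

theorem oddOrderSqrt_eq_pow_of_pow_eq_one {x : M} {d : ℕ} (hd : Odd d) (hx : x ^ d = 1) :
    oddOrderSqrt x = x ^ ((d + 1) / 2) := by
  have hord : Odd (orderOf x) := hd.of_dvd_nat (orderOf_dvd_of_pow_eq_one hx)
  have hsq : oddOrderSqrt x ^ 2 = x := by
    rw [oddOrderSqrt, pow_right_comm]
    exact sq_pow_succ_div_two_of_pow_eq_one hord (pow_orderOf_eq_one x)
  have hpow : oddOrderSqrt x ^ d = 1 := by
    rw [oddOrderSqrt, pow_right_comm, hx, one_pow]
  rw [← sq_pow_succ_div_two_of_pow_eq_one hd hpow, hsq]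

end OddOrderSqrt

theorem IsPrimitiveRoot.prod_nthRootsFinset_eq_one {R : Type*} [CommRing R] [IsDomain R] {ξ : R}
    {n : ℕ} (hn : Odd n) (h : IsPrimitiveRoot ξ n) : ∏ ζ ∈ nthRootsFinset n (1 : R), ζ = 1 := by
  simpa [hn.pos.ne'] using (h.pow_add_pow_eq_prod_add_mul 0 1 hn).symm

theorem prod_nthRootsFinset_comp_pow {K β : Type*} [Field K] [CommMonoid β] {n e : ℕ}
    (hen : e.Coprime n) (f : K → β) :
    ∏ ζ ∈ nthRootsFinset n (1 : K), f (ζ ^ e) = ∏ ζ ∈ nthRootsFinset n (1 : K), f ζ := by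
  classical
  rcases n.eq_zero_or_pos with rfl | hn
  · simp [nthRootsFinset_zero]
  set S := nthRootsFinset n (1 : K)
  have hmem : ∀ ζ, ζ ∈ S ↔ ζ ^ n = 1 := fun ζ => mem_nthRootsFinset hn 1
  have hinj : Set.InjOn (· ^ e) (S : Set K) := by
    intro ζ hζ ω hω (h : ζ ^ e = ω ^ e)
    have hζ : ζ ^ n = 1 := (hmem ζ).mp hζ
    have hω : ω ^ n = 1 := (hmem ω).mp hω
    have hω0 : ω ≠ 0 := by rintro rfl; simp [hn.ne'] at hω
    have : (ζ / ω) ^ e.gcd n = 1 :=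
      pow_gcd_eq_one.mpr ⟨by rw [div_pow, h, div_self (pow_ne_zero e hω0)],
        by rw [div_pow, hζ, hω, div_one]⟩
    rwa [hen, pow_one, div_eq_one_iff_eq hω0] at this
  have himage : S.image (· ^ e) = S := by
    refine eq_of_subset_of_card_le (fun ω hω => ?_) (card_image_of_injOn hinj).ge
    obtain ⟨ζ, hζ, rfl⟩ := mem_image.mp hω
    rw [hmem, ← pow_mul, mul_comm, pow_mul, (hmem ζ).mp hζ, one_pow]
  rw [← prod_image hinj, himage]

theorem cyc_eq_oddOrderSqrt (e : ℕ) (ζ : ℂ) :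
    cyc e ζ = oddOrderSqrt ζ ^ (1 - (e : ℤ)) * (1 - ζ ^ e) / (1 - ζ) := by
  have hhalf : ((orderOf ζ : ℤ) + 1) / 2 = ((orderOf ζ + 1) / 2 : ℕ) := by omega
  rw [cyc, oddOrderSqrt, hhalf, zpow_mul, zpow_natCast]

theorem prod_nthRootsFinset_cyc_mul {p e : ℕ} (hp : Odd p) (hep : e.Coprime p) {η : ℂ}
    (hη : Odd (orderOf η)) :
    ∏ ζ ∈ nthRootsFinset p (1 : ℂ), cyc e (ζ * η) = cyc e (η ^ p) := by
  set S := nthRootsFinset p (1 : ℂ)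
  obtain ⟨ξ, hξ⟩ : ∃ ξ : ℂ, IsPrimitiveRoot ξ p :=
    ⟨_, Complex.isPrimitiveRoot_exp p hp.pos.ne'⟩
  have hprod : ∏ ζ ∈ S, ζ * η = η ^ p := by
    rw [prod_mul_distrib, hξ.prod_nthRootsFinset_eq_one hp, prod_const, hξ.card_nthRootsFinset,
      one_mul]
  have hodd : Odd (p * orderOf η) := hp.mul hη
  have hsqrt : ∏ ζ ∈ S, oddOrderSqrt (ζ * η) = oddOrderSqrt (η ^ p) := by
    have hηN : (η ^ p) ^ (p * orderOf η) = 1 := by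
      rw [← pow_mul, ← mul_assoc, mul_comm, pow_mul, pow_orderOf_eq_one, one_pow]
    rw [oddOrderSqrt_eq_pow_of_pow_eq_one hodd hηN, ← hprod, ← prod_pow]
    refine prod_congr rfl fun ζ hζ => oddOrderSqrt_eq_pow_of_pow_eq_one hodd ?_
    rw [pow_mul, mul_pow, (mem_nthRootsFinset hp.pos 1).mp hζ, one_mul, ← pow_mul,
      mul_comm, pow_mul, pow_orderOf_eq_one, one_pow]
  have hden : ∏ ζ ∈ S, (1 - ζ * η) = 1 - η ^ p := by
    rw [← hξ.pow_sub_pow_eq_prod_sub_mul 1 η hp.pos, one_pow]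
  have hnum : ∏ ζ ∈ S, (1 - (ζ * η) ^ e) = 1 - (η ^ p) ^ e := by
    simp_rw [mul_pow]
    rw [prod_nthRootsFinset_comp_pow hep (fun ζ => 1 - ζ * η ^ e),
      ← hξ.pow_sub_pow_eq_prod_sub_mul 1 (η ^ e) hp.pos, one_pow, pow_right_comm]
  simp_rw [cyc_eq_oddOrderSqrt]
  rw [prod_div_distrib, prod_mul_distrib, prod_zpow, hsqrt, hnum, hden]

theorem statement1_general (p : ℕ) (hpodd : Odd p) (e : ℕ)
    (η : ℂ) (d : ℕ) (hdodd : Odd d) (hord : orderOf η = d) (hp2 : p ^ 2 ∣ d)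
    (hcop : Nat.gcd e d = 1) :
    ∏ ζ ∈ Polynomial.nthRootsFinset p (1 : ℂ), cyc e (ζ * η) = cyc e (η ^ p) := by
  have hpd : p ∣ d := (dvd_pow_self p two_ne_zero).trans hp2
  exact prod_nthRootsFinset_cyc_mul hpodd (Nat.Coprime.coprime_dvd_right hpd hcop) (hord ▸ hdodd)

/-- (Lemma 4.4(2), norm relation in the `p`-direction.)  For an odd prime
`p`, `e > 1`, and a root of unity `η` of odd order `d` with `p² ∣ d` and `gcd (e, d) = 1`,
one has `∏_{ζ^p = 1} cyc (ζ η) = cyc (η^p)`, the product running over all `p`-th roots of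
unity `ζ ∈ ℂ` (including `ζ = 1`). -/
theorem statement1 (p : ℕ) (hp : p.Prime) (hpodd : Odd p) (e : ℕ) (he : 1 < e)
    (η : ℂ) (d : ℕ) (hdodd : Odd d) (hord : orderOf η = d) (hp2 : p ^ 2 ∣ d)
    (hcop : Nat.gcd e d = 1) :
    ∏ ζ ∈ Polynomial.nthRootsFinset p (1 : ℂ), cyc e (ζ * η) = cyc e (η ^ p) :=
  statement1_general p hpodd e η d hdodd hord hp2 hcop
end

section
/- Let p be an odd prime, N ≥ 1 an integer, and L/K a finite Galois extension of fields of characteristic zero such that L contains no primitive p-th root of unity. Then the natural map K^×/(K^×)^{p^N} → (L^×/(L^×)^{p^N})^{Gal(L/K)} induced by the inclusion K ⊆ L is bijective. -/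
/-- The quotient of a commutative group `G` by the subgroup of `n`-th powers. -/
abbrev powQuot (G : Type*) [CommGroup G] (n : ℕ) : Type _ :=
  G ⧸ (powMonoidHom n : G →* G).range

/-- The map `G/(Gⁿ) → H/(Hⁿ)` induced by a group homomorphism `f : G →* H`. -/
def powQuotMap {G H : Type*} [CommGroup G] [CommGroup H] (n : ℕ) (f : G →* H) :
    powQuot G n →* powQuot H n :=
  QuotientGroup.map _ _ f (by
    rintro x ⟨y, rfl⟩
    exact ⟨f y, by simp [powMonoidHom, map_pow]⟩)

/-!
Since `L` contains no nontrivial `p`-th root of unity, `u ↦ u ^ p ^ N` is injective on `Lˣ`, and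
`Kˣ` is the subgroup of `Gal(L/K)`-fixed points of `Lˣ`. Injectivity: if `a ∈ Kˣ` equals `b ^ p ^ N`
with `b ∈ Lˣ`, then `(σ b) ^ p ^ N = b ^ p ^ N` forces `σ b = b`, so `b ∈ Kˣ`. Surjectivity: if the
class of `b` is fixed, write `σ b / b = c σ ^ p ^ N`; injectivity of `p ^ N`-th powers makes `c` a
1-cocycle, Hilbert 90 writes it as `c σ = σ β / β`, and then `b / β ^ p ^ N` is fixed, hence lies
in `Kˣ`.
-/

open groupCohomology

theorem eq_one_of_pow_pow_eq_one {M : Type*} [Monoid M] {p : ℕ}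
    (h : ∀ g : M, g ^ p = 1 → g = 1) :
    ∀ (N : ℕ) {g : M}, g ^ p ^ N = 1 → g = 1
  | 0, g, hg => by rwa [pow_zero, pow_one] at hg
  | N + 1, g, hg => h g (eq_one_of_pow_pow_eq_one h N (by rwa [← pow_mul, ← pow_succ']))

theorem pow_pow_injective {G : Type*} [CommGroup G] {p : ℕ}
    (h : ∀ g : G, g ^ p = 1 → g = 1) (N : ℕ) : Function.Injective fun g : G ↦ g ^ p ^ N :=
  fun a b hab ↦ div_eq_one.mp <|
    eq_one_of_pow_pow_eq_one h N (by rw [div_pow]; exact div_eq_one.mpr hab)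

theorem Units.eq_one_of_pow_eq_one_of_forall_not_isPrimitiveRoot {M : Type*} [CommMonoid M]
    {p : ℕ} (hp : p.Prime) (h : ∀ ζ : M, ¬IsPrimitiveRoot ζ p) {u : Mˣ} (hu : u ^ p = 1) :
    u = 1 := by
  have : Fact p.Prime := ⟨hp⟩
  by_contra hne
  have hord : orderOf u = p := orderOf_eq_prime hu hne
  exact h u (IsPrimitiveRoot.coe_units_iff.mpr (hord ▸ IsPrimitiveRoot.orderOf u))

section PowQuot

variable {G A : Type*} [Group G] [CommGroup A] [MulDistribMulAction G A] {n : ℕ}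

theorem isMulCocycle₁_of_pow_eq_smul_div (hn : Function.Injective fun a : A ↦ a ^ n)
    {b : A} {c : G → A} (hc : ∀ g, c g ^ n = g • b / b) : IsMulCocycle₁ c := by
  intro g h
  apply hn
  simp only [mul_pow, ← smul_pow', hc, mul_smul, smul_div']
  exact (div_mul_div_cancel _ _ _).symm

theorem exists_div_pow_mem_fixedPoints
    (hn : Function.Injective fun a : A ↦ a ^ n)
    (h90 : ∀ c : G → A, IsMulCocycle₁ c → IsMulCoboundary₁ c)
    {b : A} (hb : ∀ g : G, ∃ c : A, c ^ n = g • b / b) :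
    ∃ β : A, b / β ^ n ∈ MulAction.fixedPoints G A := by
  choose c hc using hb
  obtain ⟨β, hβ⟩ := h90 c (isMulCocycle₁_of_pow_eq_smul_div hn hc)
  refine ⟨β, fun g ↦ ?_⟩
  rw [smul_div', smul_pow', ← div_mul_cancel (g • b) b, ← div_mul_cancel (g • β) β, ← hc, hβ,
    mul_pow, mul_div_mul_left_eq_div]

theorem powQuotMap_mk {B : Type*} [CommGroup B] (f : A →* B) (a : A) :
    powQuotMap n f (QuotientGroup.mk a) = QuotientGroup.mk (f a) :=
  rfl

theorem powQuot_mk_eq_one_iff {a : A} :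
    (QuotientGroup.mk a : powQuot A n) = 1 ↔ ∃ c : A, c ^ n = a :=
  QuotientGroup.eq_one_iff a

theorem powQuot_mk_eq_mk_iff {a b : A} :
    (QuotientGroup.mk a : powQuot A n) = QuotientGroup.mk b ↔ ∃ c : A, c ^ n = a / b := by
  rw [QuotientGroup.eq_iff_div_mem]
  rfl

variable {H : Type*} [CommGroup H] {i : H →* A}

theorem injective_powQuotMap_of_range_eq_fixedPoints (hn : Function.Injective fun a : A ↦ a ^ n)
    (hi : Function.Injective i) (hfix : Set.range i = MulAction.fixedPoints G A) :
    Function.Injective (powQuotMap n i) := by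
  rw [injective_iff_map_eq_one]
  rintro ⟨h⟩ hh
  obtain ⟨b, hb⟩ := powQuot_mk_eq_one_iff.mp hh
  have hb_fixed : b ∈ MulAction.fixedPoints G A := fun g ↦ hn <| by
    change (g • b) ^ n = b ^ n
    rw [← smul_pow', hb]
    exact (hfix ▸ Set.mem_range_self h : i h ∈ MulAction.fixedPoints G A) g
  obtain ⟨k, rfl⟩ := hfix ▸ hb_fixed
  exact powQuot_mk_eq_one_iff.mpr ⟨k, hi (by rwa [map_pow])⟩

theorem range_powQuotMap_eq_fixedPoints (hn : Function.Injective fun a : A ↦ a ^ n)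
    (h90 : ∀ c : G → A, IsMulCocycle₁ c → IsMulCoboundary₁ c)
    (hfix : Set.range i = MulAction.fixedPoints G A) :
    Set.range (powQuotMap n i) =
      {y | ∀ g : G, powQuotMap n (MulDistribMulAction.toMonoidHom A g) y = y} := by
  ext y
  constructor
  · rintro ⟨x, rfl⟩ g
    induction x using QuotientGroup.induction_on with | H k => ?_
    have hk_fixed : i k ∈ MulAction.fixedPoints G A := hfix ▸ Set.mem_range_self k
    rw [powQuotMap_mk, powQuotMap_mk, MulDistribMulAction.toMonoidHom_apply, hk_fixed g]
  · induction y using QuotientGroup.induction_on with | H b => ?_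
    intro hb
    replace hb (g : G) : ∃ c : A, c ^ n = g • b / b := powQuot_mk_eq_mk_iff.mp (hb g)
    obtain ⟨β, hβ⟩ := exists_div_pow_mem_fixedPoints hn h90 hb
    obtain ⟨k, hk⟩ := hfix ▸ hβ
    refine ⟨QuotientGroup.mk k, powQuot_mk_eq_mk_iff.mpr ⟨β⁻¹, ?_⟩⟩
    rw [hk, inv_pow, div_div_cancel_left]

end PowQuot

theorem AlgEquiv.units_map_eq_toMonoidHom {K L : Type*} [CommSemiring K] [Semiring L]
    [Algebra K L] (σ : L ≃ₐ[K] L) :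
    Units.map σ.toRingEquiv.toRingHom.toMonoidHom = MulDistribMulAction.toMonoidHom Lˣ σ :=
  rfl

theorem Units.range_map_algebraMap_eq_fixedPoints (K L : Type*) [Field K] [Field L]
    [Algebra K L] [IsGalois K L] :
    Set.range (Units.map (algebraMap K L).toMonoidHom) =
      MulAction.fixedPoints (L ≃ₐ[K] L) Lˣ := by
  ext u
  constructor
  · rintro ⟨k, rfl⟩ σ
    exact Units.ext (σ.commutes k)
  · intro hu
    obtain ⟨k, hk⟩ := (InfiniteGalois.mem_range_algebraMap_iff_fixed (u : L)).mpr
      fun σ ↦ congrArg Units.val (hu σ)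
    have hk0 : k ≠ 0 := by
      rintro rfl
      exact u.ne_zero (by rw [← hk, map_zero])
    exact ⟨Units.mk0 k hk0, Units.ext hk⟩

theorem statement2_general (p N : ℕ) (hp : p.Prime)
    (K L : Type*) [Field K] [Field L] [Algebra K L]
    [FiniteDimensional K L] [IsGalois K L]
    (hnoroot : ∀ ζ : L, ¬ IsPrimitiveRoot ζ p) :
    Function.Injective
      (powQuotMap (p ^ N) (Units.map (algebraMap K L).toMonoidHom)) ∧
    Set.range (powQuotMap (p ^ N) (Units.map (algebraMap K L).toMonoidHom)) =
      {y : powQuot Lˣ (p ^ N) | ∀ σ : L ≃ₐ[K] L,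
        powQuotMap (p ^ N) (Units.map σ.toRingEquiv.toRingHom.toMonoidHom) y = y} := by
  have hn : Function.Injective fun u : Lˣ ↦ u ^ p ^ N := pow_pow_injective
    (fun _ ↦ Units.eq_one_of_pow_eq_one_of_forall_not_isPrimitiveRoot hp hnoroot) N
  have hfix := Units.range_map_algebraMap_eq_fixedPoints K L
  simp only [AlgEquiv.units_map_eq_toMonoidHom]
  exact ⟨injective_powQuotMap_of_range_eq_fixedPoints hn
      (Units.map_injective (algebraMap K L).injective) hfix,
    range_powQuotMap_eq_fixedPoints hn
      isMulCoboundary₁_of_isMulCocycle₁_of_aut_to_units hfix⟩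

/-- Let `p` be an odd prime, `N ≥ 1`, and `L/K` a finite Galois extension
of characteristic-zero fields such that `L` contains no primitive `p`-th root of unity.
Then `K^×/(K^×)^{p^N} → (L^×/(L^×)^{p^N})^{Gal(L/K)}` is bijective: the induced map on
power quotients is injective, and its range is exactly the set of `Gal(L/K)`-fixed points. -/
theorem statement2 (p N : ℕ) (hp : p.Prime) (hpodd : Odd p) (hN : 1 ≤ N)
    (K L : Type*) [Field K] [Field L] [CharZero K] [CharZero L] [Algebra K L]
    [FiniteDimensional K L] [IsGalois K L]
    (hnoroot : ∀ ζ : L, ¬ IsPrimitiveRoot ζ p) :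
    Function.Injective
      (powQuotMap (p ^ N) (Units.map (algebraMap K L).toMonoidHom)) ∧
    Set.range (powQuotMap (p ^ N) (Units.map (algebraMap K L).toMonoidHom)) =
      {y : powQuot Lˣ (p ^ N) | ∀ σ : L ≃ₐ[K] L,
        powQuotMap (p ^ N) (Units.map σ.toRingEquiv.toRingHom.toMonoidHom) y = y} :=
  statement2_general p N hp K L hnoroot
end

section
/- Let p be a prime, N ≥ 1, and G a finite abelian group. Then the group ring R := (ℤ/p^Nℤ)[G] is an injective module over itself; that is, every R-module homomorphism from a submodule of an R-module M into R extends to an R-module homomorphism M → R. -/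
/-!
Let `R = (ℤ/n)[G]` with `n ≠ 0`. Being flat over itself, `R` has an injective character module
`R⋆ = Hom_ℤ(R, ℚ/ℤ)`. The character `ψ(y) = y(1)/n` of `R` identifies `R` with `R⋆` via
`r ↦ r • ψ`: for `ℤ/n` this is the isomorphism `ℤ/n ≅ (ℤ/n)⋆`, `1 ↦ 1/n`, and a character of
`R` is the same as a family of characters of the summands `(ℤ/n)·g`, `g ∈ G`. Hence `R` is
injective over itself.
-/

namespace CharacterModule

def IsGenerating {R : Type*} [CommRing R] (ψ : CharacterModule R) : Prop :=
  Function.Bijective (LinearMap.toSpanSingleton R (CharacterModule R) ψ)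

theorem IsGenerating.injective_self {R : Type*} [CommRing R] {ψ : CharacterModule R}
    (hψ : ψ.IsGenerating) : Module.Injective R R :=
  have hR : Module.Injective R (CharacterModule R) :=
    Module.Flat.iff_characterModule_injective.mp inferInstance
  ((Module.Baer.of_injective hR).of_equiv (LinearEquiv.ofBijective _ hψ).symm).injective

end CharacterModule

namespace ZMod

variable (n : ℕ) [NeZero n]

noncomputable def character : CharacterModule (ZMod n) :=
  ZMod.lift n ⟨zmultiplesHom _ (((n : ℚ)⁻¹ : ℚ) : AddCircle (1 : ℚ)), by
    rw [zmultiplesHom_apply, natCast_zsmul, ← AddCircle.coe_nsmul, nsmul_eq_mul,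
      mul_inv_cancel₀ (NeZero.ne _), AddCircle.coe_period]⟩

variable {n}

theorem character_intCast (m : ℤ) : character n m = ((m / n : ℚ) : AddCircle (1 : ℚ)) :=
  (lift_coe n _ m).trans <| by
    rw [zmultiplesHom_apply, ← AddCircle.coe_zsmul, zsmul_eq_mul, div_eq_mul_inv]

theorem character_injective : Function.Injective (character n) := by
  refine (injective_iff_map_eq_zero _).mpr fun a ha => ?_
  obtain ⟨m, rfl⟩ := intCast_surjective a
  rw [character_intCast, AddCircle.coe_eq_zero_iff] at ha
  obtain ⟨k, hk⟩ := ha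
  rw [zsmul_one, eq_div_iff (NeZero.ne _)] at hk
  rw [intCast_zmod_eq_zero_iff_dvd]
  exact ⟨k, by exact_mod_cast hk.symm.trans (mul_comm _ _)⟩

theorem exists_character_eq_of_nsmul_eq_zero {u : AddCircle (1 : ℚ)} (hu : n • u = 0) :
    ∃ a, character n a = u := by
  obtain ⟨m, -, rfl⟩ := (AddCircle.nsmul_eq_zero_iff (NeZero.pos n)).mp hu
  exact ⟨m, by simpa using character_intCast (m : ℤ)⟩

theorem isGenerating_character : (character n).IsGenerating := by
  constructor
  · refine (injective_iff_map_eq_zero _).mpr fun a ha => character_injective ?_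
    have : character n (a * 1) = 0 := DFunLike.congr_fun ha 1
    rw [← mul_one a, this, map_zero]
  · intro c
    have hc : n • c 1 = 0 := by
      rw [← map_nsmul, nsmul_eq_mul, natCast_self, zero_mul, map_zero]
    obtain ⟨a, ha⟩ := exists_character_eq_of_nsmul_eq_zero hc
    refine ⟨a, ?_⟩
    ext b
    obtain ⟨m, rfl⟩ := intCast_surjective b
    rw [LinearMap.toSpanSingleton_apply, CharacterModule.smul_apply, smul_eq_mul, mul_comm,
      ← zsmul_eq_mul, map_zsmul, ha, ← map_zsmul, zsmul_one]

end ZMod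

namespace MonoidAlgebra

variable {k G : Type*} [CommRing k] [CommGroup G]

noncomputable def character (ψ : CharacterModule k) : CharacterModule (MonoidAlgebra k G) :=
  ψ.comp ((Finsupp.applyAddHom 1).comp coeffAddEquiv.toAddMonoidHom)

theorem smul_character_apply_single (ψ : CharacterModule k) (r : MonoidAlgebra k G) (g : G)
    (b : k) : (r • character ψ) (single g b) = (r.coeff g⁻¹ • ψ) b := by
  change ψ ((r * single g b).coeff 1) = ψ (r.coeff g⁻¹ * b)
  rw [coeff_mul_single_apply, one_mul]

theorem isGenerating_character [Finite G] {ψ : CharacterModule k} (hψ : ψ.IsGenerating) :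
    (character ψ : CharacterModule (MonoidAlgebra k G)).IsGenerating := by
  constructor
  · refine (injective_iff_map_eq_zero _).mpr fun r hr =>
      coeff_eq_zero.mp (Finsupp.ext fun g => ?_)
    have : r.coeff g • ψ = 0 := by
      ext b
      rw [← inv_inv g, ← smul_character_apply_single]
      exact DFunLike.congr_fun hr _
    exact (injective_iff_map_eq_zero _).mp hψ.1 _ this
  · intro c
    choose a ha using fun g : G => hψ.2 ((c : MonoidAlgebra k G →+ _).comp (singleAddHom g⁻¹))
    have := Fintype.ofFinite G
    refine ⟨ofCoeff (Finsupp.equivFunOnFinite.symm a), addMonoidHom_ext fun g b => ?_⟩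
    change ((_ : MonoidAlgebra k G) • character ψ) (single g b) = c (single g b)
    rw [smul_character_apply_single]
    have := DFunLike.congr_fun (ha g⁻¹) b
    rwa [inv_inv] at this

end MonoidAlgebra

theorem statement8_general (p N : ℕ) (hp : p.Prime)
    (G : Type*) [CommGroup G] [Finite G] :
    Module.Injective (MonoidAlgebra (ZMod (p ^ N)) G) (MonoidAlgebra (ZMod (p ^ N)) G) :=
  have : NeZero (p ^ N) := ⟨pow_ne_zero _ hp.ne_zero⟩
  (MonoidAlgebra.isGenerating_character ZMod.isGenerating_character).injective_self

/-- For a prime `p`, `N ≥ 1` and a finite abelian group `G`, the group ring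
`R = (ℤ/p^Nℤ)[G]` is self-injective: every `R`-module homomorphism from a submodule of an
`R`-module into `R` extends to the whole module. -/
theorem statement8 (p N : ℕ) (hp : p.Prime) (hN : 1 ≤ N)
    (G : Type*) [CommGroup G] [Finite G] :
    Module.Injective (MonoidAlgebra (ZMod (p ^ N)) G) (MonoidAlgebra (ZMod (p ^ N)) G) :=
  statement8_general p N hp G
end
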